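/- Symmetrization symbol identity: with q(ξ−η,η) = (ξ·(ξ−η)/(2π|ξ|²))·((ξ−η)×η) and q₂ as above, the fully symmetrized symbol q₃(ξ−η,η) := [q(ξ−η,η)+q(η,ξ−η)]/2 + [q(ξ,−η)+q(−η,ξ)]/2 equals −(ξ·η/(2π|ξ|²) + (ξ−η)·η/(2π|ξ−η|²))·((ξ−η)×η), and equivalently q₃(ξ−η,η) = −(q₂(ξ−η,η) + q₂(ξ,−η))/2. -/
import Mathlib


noncomputable section

abbrev E2 := EuclideanSpace ℝ (Fin 2)

/-- The 2D cross product `a × b = a₁b₂ − a₂b₁`. -/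
def cross (a b : E2) : ℝ := a 0 * b 1 - a 1 * b 0

/-- The dot product on ℝ². -/
def dot (a b : E2) : ℝ := a 0 * b 0 + a 1 * b 1

/-- The symbol `q(a,b) = ((a+b)·a/(2π|a+b|²))·(a×b)`, output frequency `a+b`. -/
def qsym (a b : E2) : ℝ := (dot (a + b) a / (2 * Real.pi * ‖a + b‖ ^ 2)) * cross a b

/-- The symbol `q₂(a,b) = ((a+b)·b/(π|a+b|²))·(a×b)`, output frequency `a+b`
(so `q₂(ξ−η,η) = (ξ·η/(π|ξ|²))·((ξ−η)×η)`). -/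
def q2sym (a b : E2) : ℝ := (dot (a + b) b / (Real.pi * ‖a + b‖ ^ 2)) * cross a b

/-- The fully symmetrized symbol
`q₃(ξ−η,η) = [q(ξ−η,η)+q(η,ξ−η)]/2 + [q(ξ,−η)+q(−η,ξ)]/2`. -/
def q3sym (ξ η : E2) : ℝ :=
  (qsym (ξ - η) η + qsym η (ξ - η)) / 2 + (qsym ξ (-η) + qsym (-η) ξ) / 2

/-- the symmetrization symbol identity
`q₃(ξ−η,η) = −(ξ·η/(2π|ξ|²) + (ξ−η)·η/(2π|ξ−η|²))·((ξ−η)×η)`, and equivalently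
`q₃(ξ−η,η) = −(q₂(ξ−η,η) + q₂(ξ,−η))/2`. -/
theorem stmt16 (ξ η : E2) (hξ : ξ ≠ 0) (hξη : ξ - η ≠ 0) (hη : η ≠ 0) :
    q3sym ξ η =
        -(dot ξ η / (2 * Real.pi * ‖ξ‖ ^ 2) + dot (ξ - η) η / (2 * Real.pi * ‖ξ - η‖ ^ 2)) *
          cross (ξ - η) η ∧
      q3sym ξ η = -(q2sym (ξ - η) η + q2sym ξ (-η)) / 2 := by
  have hns : ∀ x : E2, ‖x‖ ^ 2 = x 0 ^ 2 + x 1 ^ 2 := by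
    intro x
    rw [EuclideanSpace.norm_eq, Real.sq_sqrt (by positivity)]
    simp [Fin.sum_univ_two, sq_abs]
  have hξ2 : ξ 0 ^ 2 + ξ 1 ^ 2 ≠ 0 := by
    rw [← hns]; exact pow_ne_zero 2 (norm_ne_zero_iff.mpr hξ)
  have hξη2 : (ξ - η) 0 ^ 2 + (ξ - η) 1 ^ 2 ≠ 0 := by
    rw [← hns]; exact pow_ne_zero 2 (norm_ne_zero_iff.mpr hξη)
  have hπ : Real.pi ≠ 0 := Real.pi_ne_zero
  have e1 : ξ - η + η = ξ := by abel
  have e2 : η + (ξ - η) = ξ := by abel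
  have e3 : ξ + -η = ξ - η := by abel
  have e4 : -η + ξ = ξ - η := by abel
  simp only [q3sym, qsym, q2sym, e1, e2, e3, e4, hns, dot, cross,
    PiLp.sub_apply, PiLp.neg_apply] at *
  constructor <;> (field_simp; ring)

end
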